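/- arXiv:2510.07541 — 5 statements merged into one kernel-verified Lean document; each statement's English description precedes it below -/
import Mathlib

section
/- Every SB-generated group has uncountable cofinality: if G is generated by a strongly bounded subset and G = ⋃_{n∈ℕ} H_n for an increasing sequence of subgroups H_1 ≤ H_2 ≤ ⋯, then G = H_n for some n. -/
open Pointwise

/-- `d` is a left-invariant metric on the group `G`. -/
def IsLeftInvMetric {G : Type*} [Group G] (d : G → G → ℝ) : Prop :=
  (∀ x y, d x y = 0 ↔ x = y) ∧ (∀ x y, d x y = d y x) ∧
    (∀ x y z, d x z ≤ d x y + d y z) ∧ (∀ k x y, d (k * x) (k * y) = d x y)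

/-- `d` is a left-invariant pseudo-metric on the group `G`. -/
def IsLeftInvPseudoMetric {G : Type*} [Group G] (d : G → G → ℝ) : Prop :=
  (∀ x, d x x = 0) ∧ (∀ x y, d x y = d y x) ∧
    (∀ x y z, d x z ≤ d x y + d y z) ∧ (∀ k x y, d (k * x) (k * y) = d x y)

/-- A subset of a group is strongly bounded if it has finite diameter in every
left-invariant metric on the group. -/
def StronglyBounded {G : Type*} [Group G] (A : Set G) : Prop :=
  ∀ d : G → G → ℝ, IsLeftInvMetric d → ∃ D : ℝ, ∀ a ∈ A, ∀ b ∈ A, d a b ≤ D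

/-- The word length of `g` with respect to `S`: the least `n` with `g ∈ S^n`. -/
noncomputable def wordLength {G : Type*} [Group G] (S : Set G) (g : G) : ℕ :=
  sInf {n : ℕ | g ∈ S ^ n}

/-- The word metric associated to a generating set `S`. -/
noncomputable def wordMetric {G : Type*} [Group G] (S : Set G) (g h : G) : ℝ :=
  (wordLength S (h⁻¹ * g) : ℝ)

theorem stmt4 {G : Type*} [Group G] (S : Set G)
    (hSB : StronglyBounded S) (hgen : Subgroup.closure S = ⊤)
    (H : ℕ → Subgroup G) (hmono : Monotone H)
    (hunion : ∀ g : G, ∃ n, g ∈ H n) :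
    ∃ n, H n = ⊤ := by
  rcases S.eq_empty_or_nonempty with hS | ⟨s₀, hs₀⟩
  · exact ⟨0, top_unique (hgen ▸ (Subgroup.closure_le _).2 (by simp [hS]))⟩
  · set T : Set G := S ∪ S⁻¹ ∪ {1} with hT
    have hTinv : T⁻¹ = T := by
      ext x
      simp only [hT, Set.mem_inv, Set.mem_union, Set.mem_singleton_iff, inv_eq_one]
      constructor <;> (rintro ((h | h) | h) <;> simp_all <;> tauto)
    have hpow : ∀ n : ℕ, (T ^ n)⁻¹ = T ^ n := fun n => by rw [← inv_pow, hTinv]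
    have key : ∀ g : G, ∃ n, g ∈ T ^ n := by
      intro g
      have hg : g ∈ Subgroup.closure S := by rw [hgen]; trivial
      induction hg using Subgroup.closure_induction with
      | mem x hx => exact ⟨1, by rw [pow_one]; exact Or.inl (Or.inl hx)⟩
      | one => exact ⟨0, by simp⟩
      | mul x y _ _ hx hy =>
          obtain ⟨m, hm⟩ := hx
          obtain ⟨n, hn⟩ := hy
          exact ⟨m + n, by rw [pow_add]; exact Set.mul_mem_mul hm hn⟩
      | inv x _ hx =>
          obtain ⟨n, hn⟩ := hx
          exact ⟨n, by rw [← hpow]; exact Set.inv_mem_inv.2 hn⟩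
    set ℓ : G → ℕ := fun g => sInf {n : ℕ | g ∈ T ^ n} with hℓ
    set ρ : G → ℕ := fun g => sInf {n : ℕ | g ∈ H n} with hρ
    have hℓmem : ∀ g, g ∈ T ^ (ℓ g) := fun g => Nat.sInf_mem (key g)
    have hρmem : ∀ g, g ∈ H (ρ g) := fun g => Nat.sInf_mem (hunion g)
    have hℓ1 : ℓ 1 = 0 := Nat.sInf_eq_zero.2 (Or.inl (by simp))
    have hρ1 : ρ 1 = 0 := Nat.sInf_eq_zero.2 (Or.inl (show (1:G) ∈ H 0 from one_mem _))
    have hℓ0 : ∀ g, ℓ g = 0 → g = 1 := by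
      intro g h
      have := hℓmem g
      rw [h, pow_zero] at this
      simpa using this
    have hℓadd : ∀ a b : G, ℓ (a * b) ≤ ℓ a + ℓ b := by
      intro a b
      exact Nat.sInf_le (by rw [Set.mem_setOf_eq, pow_add]; exact Set.mul_mem_mul (hℓmem a) (hℓmem b))
    have hρadd : ∀ a b : G, ρ (a * b) ≤ ρ a + ρ b := by
      intro a b
      exact Nat.sInf_le (mul_mem (hmono (Nat.le_add_right _ _) (hρmem a))
        (hmono (Nat.le_add_left _ _) (hρmem b)))
    have hℓinv : ∀ a : G, ℓ a⁻¹ = ℓ a := by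
      intro a
      have : {n : ℕ | a⁻¹ ∈ T ^ n} = {n : ℕ | a ∈ T ^ n} := by
        ext n
        rw [Set.mem_setOf_eq, Set.mem_setOf_eq, ← hpow n, Set.inv_mem_inv, hpow n]
      simp only [hℓ, this]
    have hρinv : ∀ a : G, ρ a⁻¹ = ρ a := by
      intro a
      have : {n : ℕ | a⁻¹ ∈ H n} = {n : ℕ | a ∈ H n} := by
        ext n; simp [inv_mem_iff]
      simp only [hρ, this]
    set d : G → G → ℝ := fun g h => (ℓ (h⁻¹ * g) : ℝ) + (ρ (h⁻¹ * g) : ℝ) with hd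
    have hdmetric : IsLeftInvMetric d := by
      refine ⟨?_, ?_, ?_, ?_⟩
      · intro x y
        constructor
        · intro h
          simp only [hd] at h
          have h' : ((ℓ (y⁻¹ * x) + ρ (y⁻¹ * x) : ℕ) : ℝ) = 0 := by push_cast; linarith
          have h'' : ℓ (y⁻¹ * x) + ρ (y⁻¹ * x) = 0 := by exact_mod_cast h'
          have := hℓ0 _ (Nat.eq_zero_of_add_eq_zero_right h'')
          rw [inv_mul_eq_one] at this
          exact this.symm
        · rintro rfl
          simp [hd, hℓ1, hρ1]
      · intro x y
        have e : x⁻¹ * y = (y⁻¹ * x)⁻¹ := by group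
        simp only [hd]
        rw [e, hℓinv, hρinv]
      · intro x y z
        have e : z⁻¹ * x = (z⁻¹ * y) * (y⁻¹ * x) := by group
        simp only [hd]
        rw [e]
        have h1 := hℓadd (z⁻¹ * y) (y⁻¹ * x)
        have h2 := hρadd (z⁻¹ * y) (y⁻¹ * x)
        push_cast
        have h1' : ((ℓ ((z⁻¹ * y) * (y⁻¹ * x)) : ℝ)) ≤ (ℓ (z⁻¹ * y) : ℝ) + (ℓ (y⁻¹ * x) : ℝ) := by
          exact_mod_cast h1
        have h2' : ((ρ ((z⁻¹ * y) * (y⁻¹ * x)) : ℝ)) ≤ (ρ (z⁻¹ * y) : ℝ) + (ρ (y⁻¹ * x) : ℝ) := by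
          exact_mod_cast h2
        linarith
      · intro k x y
        have e : (k * y)⁻¹ * (k * x) = y⁻¹ * x := by group
        simp only [hd, e]
    obtain ⟨D, hD⟩ := hSB d hdmetric
    obtain ⟨m, hm⟩ := hunion s₀
    refine ⟨max m ⌈D⌉₊, top_unique (hgen ▸ (Subgroup.closure_le _).2 ?_)⟩
    intro a ha
    have h1 : d a s₀ ≤ D := hD a ha s₀ hs₀
    have h2 : (ρ (s₀⁻¹ * a) : ℝ) ≤ D := by
      refine le_trans ?_ h1
      simp only [hd]
      have : (0 : ℝ) ≤ (ℓ (s₀⁻¹ * a) : ℝ) := Nat.cast_nonneg _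
      linarith
    have h3 : ρ (s₀⁻¹ * a) ≤ ⌈D⌉₊ := by exact_mod_cast h2.trans (Nat.le_ceil D)
    have h4 : s₀⁻¹ * a ∈ H (max m ⌈D⌉₊) :=
      hmono (le_trans h3 (le_max_right _ _)) (hρmem _)
    have h5 : s₀ ∈ H (max m ⌈D⌉₊) := hmono (le_max_left _ _) hm
    have := mul_mem h5 h4
    simpa using this
end

section
/- Every sequentially distorted subset of a group is strongly bounded: if A ⊆ G admits a sequence {w_n} ⊆ ℕ such that for every sequence {a_n} ⊆ A there exists a finite set S ⊆ G with a_n ∈ S^{w_n} for all n, then A has finite diameter in every left-invariant metric on G. -/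
open Pointwise

/-- A subset `A` of a group is sequentially distorted. -/
def SeqDistorted {G : Type*} [Group G] (A : Set G) : Prop :=
  ∃ w : ℕ → ℕ, ∀ a : ℕ → G, (∀ n, a n ∈ A) →
    ∃ S : Set G, S.Finite ∧ ∀ n, a n ∈ S ^ (w n)

/-!
For a left-invariant pseudo-metric `d`, the length `g ↦ d 1 g` is subadditive, so
every element of `S ^ k` has length at most `k * M` when all elements of `S` have length at
most `M`. If `A` were unbounded, choose `a n ∈ A` with `d 1 (a n) > n * w n`; sequential
distortion puts every `a n` in `S ^ (w n)` for one finite `S`, and taking `n ≥ max_{s ∈ S} d 1 s`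
gives `d 1 (a n) ≤ w n * n`, a contradiction. Bounded length of `A` bounds its diameter.
-/

theorem IsLeftInvMetric.isLeftInvPseudoMetric {G : Type*} [Group G] {d : G → G → ℝ}
    (hd : IsLeftInvMetric d) : IsLeftInvPseudoMetric d :=
  ⟨fun x => (hd.1 x x).2 rfl, hd.2⟩

namespace IsLeftInvPseudoMetric

variable {G : Type*} [Group G] {d : G → G → ℝ}

theorem dist_le_dist_one_add_dist_one (hd : IsLeftInvPseudoMetric d) (a b : G) :
    d a b ≤ d 1 a + d 1 b := by
  obtain ⟨-, hsymm, htri, -⟩ := hd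
  simpa only [hsymm a 1] using htri a 1 b

theorem dist_one_mul_le (hd : IsLeftInvPseudoMetric d) (x y : G) :
    d 1 (x * y) ≤ d 1 x + d 1 y := by
  obtain ⟨-, -, htri, hinv⟩ := hd
  have hshift : d x (x * y) = d 1 y := by simpa using hinv x 1 y
  simpa only [hshift] using htri 1 x (x * y)

theorem dist_one_le_of_mem_pow (hd : IsLeftInvPseudoMetric d) {S : Set G} {M : ℝ}
    (hM : ∀ s ∈ S, d 1 s ≤ M) {k : ℕ} {g : G} (hg : g ∈ S ^ k) : d 1 g ≤ k * M := by
  induction k generalizing g with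
  | zero =>
    rw [pow_zero, Set.mem_one] at hg
    simp [hg, hd.1 1]
  | succ k ih =>
    obtain ⟨x, hx, s, hs, rfl⟩ := (pow_succ S k ▸ hg : g ∈ S ^ k * S)
    calc d 1 (x * s) ≤ d 1 x + d 1 s := hd.dist_one_mul_le x s
      _ ≤ k * M + M := add_le_add (ih hx) (hM s hs)
      _ = (k + 1 : ℕ) * M := by push_cast; ring

end IsLeftInvPseudoMetric

theorem SeqDistorted.exists_dist_one_le {G : Type*} [Group G] {A : Set G} (hA : SeqDistorted A)
    {d : G → G → ℝ} (hd : IsLeftInvPseudoMetric d) : ∃ R, ∀ a ∈ A, d 1 a ≤ R := by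
  obtain ⟨w, hw⟩ := hA
  by_contra! hunbdd
  choose a haA ha_far using fun n : ℕ => hunbdd (n * w n)
  obtain ⟨S, hSfin, haS⟩ := hw a haA
  obtain ⟨M, hM⟩ := (hSfin.image (d 1)).bddAbove
  have hS_le : ∀ s ∈ S, d 1 s ≤ M := fun s hs => hM (Set.mem_image_of_mem _ hs)
  set n := ⌈M⌉₊
  have hnear : d 1 (a n) ≤ n * w n :=
    calc d 1 (a n) ≤ w n * M := hd.dist_one_le_of_mem_pow hS_le (haS n)
      _ ≤ w n * n := mul_le_mul_of_nonneg_left (Nat.le_ceil M) (Nat.cast_nonneg _)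
      _ = n * w n := mul_comm _ _
  exact (ha_far n).not_ge hnear

theorem stmt8 {G : Type*} [Group G] (A : Set G) (hA : SeqDistorted A) :
    StronglyBounded A := by
  intro d hd
  have hpseudo := hd.isLeftInvPseudoMetric
  obtain ⟨R, hR⟩ := hA.exists_dist_one_le hpseudo
  exact ⟨R + R, fun a ha b hb =>
    (hpseudo.dist_le_dist_one_add_dist_one a b).trans (add_le_add (hR a ha) (hR b hb))⟩
end

section
/- If A₁, …, A_n are sequentially distorted subsets of a group G, then the product set A = A₁A₂⋯A_n = {a₁a₂⋯a_n : a_i ∈ A_i} is sequentially distorted in G. -/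
open Pointwise

lemma prod_mem_pow_sum {G : Type*} [Group G] (T : Set G) :
    ∀ (n : ℕ) (x : Fin n → G) (m : Fin n → ℕ), (∀ i, x i ∈ T ^ m i) →
      (List.ofFn x).prod ∈ T ^ (∑ i, m i)
  | 0, x, m, h => by simp [Set.mem_one]
  | n+1, x, m, h => by
    rw [List.ofFn_succ, List.prod_cons, Fin.sum_univ_succ, pow_add]
    exact Set.mul_mem_mul (h 0)
      (prod_mem_pow_sum T n (fun i => x i.succ) (fun i => m i.succ) (fun i => h i.succ))

theorem stmt9 {G : Type*} [Group G] (n : ℕ) (A : Fin n → Set G)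
    (hA : ∀ i, SeqDistorted (A i)) :
    SeqDistorted {g : G | ∃ a : Fin n → G,
      (∀ i, a i ∈ A i) ∧ g = (List.ofFn a).prod} := by
  choose w hw using hA
  refine ⟨fun k => ∑ i, w i k, ?_⟩
  intro a ha
  choose b hb hprod using ha
  choose S hSfin hS using fun i => hw i (fun k => b k i) (fun k => hb k i)
  refine ⟨⋃ i, S i, Set.finite_iUnion hSfin, ?_⟩
  intro k
  rw [hprod k]
  exact prod_mem_pow_sum _ n (b k) (fun i => w i k)
    (fun i => Set.pow_subset_pow_left (Set.subset_iUnion S i) (hS i k))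
end

section
/- If A₁, …, A_n are strongly distorted subsets of a group G, then the product A₁A₂⋯A_n is strongly distorted in G. -/
open Pointwise

/-- A subset `A` of a group is strongly distorted. -/
def StronglyDistorted {G : Type*} [Group G] (A : Set G) : Prop :=
  ∃ m : ℕ, ∃ w : ℕ → ℕ, ∀ a : ℕ → G, (∀ k, a k ∈ A) →
    ∃ S : Set G, S.Finite ∧ S.ncard ≤ m ∧ ∀ k, a k ∈ S ^ (w k)

lemma aux_prod_mem_pow_sum {G : Type*} [Monoid G] (S : Set G) :
    ∀ {n : ℕ} (a : Fin n → G) (c : Fin n → ℕ), (∀ i, a i ∈ S ^ c i) →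
      (List.ofFn a).prod ∈ S ^ (∑ i, c i) := by
  intro n
  induction n with
  | zero => intro a c _; simp
  | succ n ih =>
    intro a c h
    rw [List.ofFn_succ, List.prod_cons, Fin.sum_univ_succ, pow_add]
    exact Set.mul_mem_mul (h 0) (ih _ _ fun i => h i.succ)

theorem stmt10 {G : Type*} [Group G] (n : ℕ) (A : Fin n → Set G)
    (hA : ∀ i, StronglyDistorted (A i)) :
    StronglyDistorted {g : G | ∃ a : Fin n → G,
      (∀ i, a i ∈ A i) ∧ g = (List.ofFn a).prod} := by
  choose m w h using hA
  refine ⟨∑ i, m i, fun k => ∑ i, w i k, ?_⟩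
  intro a ha
  choose b hb hprod using ha
  choose S hSfin hScard hSmem using fun i => h i (fun k => b k i) (fun k => hb k i)
  classical
  set F : Finset G := Finset.univ.biUnion (fun i => (hSfin i).toFinset) with hF
  have hsub : ∀ i, S i ⊆ (F : Set G) := by
    intro i x hx
    simp only [hF, Finset.coe_biUnion, Finset.coe_univ, Set.mem_iUnion]
    exact ⟨i, trivial, by simpa using hx⟩
  refine ⟨(F : Set G), F.finite_toSet, ?_, ?_⟩
  · rw [Set.ncard_coe_finset]
    calc F.card ≤ ∑ i, ((hSfin i).toFinset).card := Finset.card_biUnion_le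
      _ ≤ ∑ i, m i := Finset.sum_le_sum fun i _ => by
          rw [← Set.ncard_eq_toFinset_card (S i) (hSfin i)]; exact hScard i
  · intro k
    rw [hprod k]
    exact aux_prod_mem_pow_sum _ (b k) (fun i => w i k)
      (fun i => Set.pow_subset_pow_left (hsub i) (hSmem i k))
end

section
/- An abelian group A is SB-generated if and only if A is finitely generated. Equivalently, for abelian groups, finite generation, SB-generation, and uncountable cofinality all coincide. -/
open Pointwise

/-- A group is SB-generated if it is generated by a strongly bounded subset. -/
def SBGenerated (G : Type*) [Group G] : Prop :=
  ∃ S : Set G, StronglyBounded S ∧ Subgroup.closure S = ⊤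

/-- A group has uncountable cofinality if it is not the union of a strictly
increasing sequence of (necessarily proper) subgroups indexed by `ℕ`. -/
def UncountableCofinality (G : Type*) [Group G] : Prop :=
  ¬ ∃ H : ℕ → Subgroup G, StrictMono H ∧ ∀ g : G, ∃ n, g ∈ H n

/-!
A finite generating set is bounded in every metric. Conversely, if `S` is strongly bounded and
`H₀ ≤ H₁ ≤ ⋯` is a chain of subgroups exhausting `G`, then `g ↦ min {n | g ∈ Hₙ}` is a group
seminorm; it is bounded on `S`, so `S`, and with it the subgroup generated by `S`, lies in a single
`Hₙ`. Hence SB-generated groups have uncountable cofinality.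

In an abelian group `A` of uncountable cofinality every exhausting chain of subgroups terminates.
A maximal ℤ-independent subset `I` is then finite: otherwise the saturations of the spans of `I`
minus ever shorter tails of a sequence in `I` form an exhausting chain that never terminates.
So `A / ⟨I⟩` is torsion, and the chain `{x | n! • x = 0}` shows that it has a bounded exponent `m`.
A group of exponent `m = p * m'` with `p` prime is finitely generated by induction on `m`:
`A / pA` is a finite-dimensional `𝔽_p`-vector space, and if `F` is a finitely generated subgroup
with `F + pA = A`, then `A / F` has exponent `m'`.
-/

theorem GroupNorm.isLeftInvMetric {G : Type*} [Group G] (q : GroupNorm G) :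
    IsLeftInvMetric fun g h => q (g⁻¹ * h) := by
  refine ⟨fun g h => ?_, fun g h => ?_, fun g h k => ?_, fun k g h => ?_⟩
  · rw [map_eq_zero_iff_eq_one, inv_mul_eq_one]
  · dsimp only
    rw [← map_inv_eq_map q, mul_inv_rev, inv_inv]
  · calc q (g⁻¹ * k) = q (g⁻¹ * h * (h⁻¹ * k)) := by group
      _ ≤ q (g⁻¹ * h) + q (h⁻¹ * k) := map_mul_le_add q _ _
  · simp only [mul_inv_rev, mul_assoc, inv_mul_cancel_left]

theorem StronglyBounded.exists_bound_groupSeminorm {G : Type*} [Group G] {S : Set G}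
    (hS : StronglyBounded S) (p : GroupSeminorm G) :
    ∃ D : ℝ, ∀ a ∈ S, ∀ b ∈ S, p (a⁻¹ * b) ≤ D := by
  classical
  -- adding the discrete norm turns `p` into a norm that dominates it
  let q : GroupNorm G :=
    { p + (1 : GroupNorm G).toGroupSeminorm with
      eq_one_of_map_eq_zero' := fun g hg => by
        by_contra hg1
        have : 0 < p g + (1 : GroupNorm G) g := add_pos_of_nonneg_of_pos (apply_nonneg p g)
          (map_pos_of_ne_one _ hg1)
        exact this.ne' hg }
  obtain ⟨D, hD⟩ := hS _ q.isLeftInvMetric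
  refine ⟨D, fun a ha b hb => (le_add_of_nonneg_right (apply_nonneg _ _)).trans (hD a ha b hb)⟩

section Chain

variable {G : Type*} [Group G] {H : ℕ → Subgroup G}

noncomputable def chainIndex (H : ℕ → Subgroup G) (g : G) : ℕ :=
  sInf {n | g ∈ H n}

theorem mem_chainIndex (hcov : ∀ g, ∃ n, g ∈ H n) (g : G) : g ∈ H (chainIndex H g) :=
  Nat.sInf_mem (hcov g)

theorem chainIndex_le {g : G} {n : ℕ} (hg : g ∈ H n) : chainIndex H g ≤ n :=
  Nat.sInf_le hg

noncomputable def chainSeminorm (hmono : Monotone H) (hcov : ∀ g, ∃ n, g ∈ H n) :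
    GroupSeminorm G where
  toFun g := chainIndex H g
  map_one' := by simpa using chainIndex_le (one_mem (H 0))
  mul_le' g h := by
    have hgh : g * h ∈ H (max (chainIndex H g) (chainIndex H h)) :=
      mul_mem (hmono (le_max_left _ _) (mem_chainIndex hcov g))
        (hmono (le_max_right _ _) (mem_chainIndex hcov h))
    exact_mod_cast (chainIndex_le hgh).trans (max_le_add_of_nonneg (by positivity) (by positivity))
  inv' g := by
    have hinv_le (g : G) : chainIndex H g⁻¹ ≤ chainIndex H g :=
      chainIndex_le (inv_mem (mem_chainIndex hcov g))
    exact_mod_cast le_antisymm (hinv_le g) (by simpa using hinv_le g⁻¹)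

theorem StronglyBounded.exists_subset_of_monotone {S : Set G} (hS : StronglyBounded S)
    (hmono : Monotone H) (hcov : ∀ g, ∃ n, g ∈ H n) : ∃ n, S ⊆ H n := by
  rcases S.eq_empty_or_nonempty with rfl | ⟨s₀, hs₀⟩
  · exact ⟨0, Set.empty_subset _⟩
  obtain ⟨D, hD⟩ := hS.exists_bound_groupSeminorm (chainSeminorm hmono hcov)
  refine ⟨max (chainIndex H s₀) ⌈D⌉₊, fun s hs => ?_⟩
  have hindex : chainIndex H (s₀⁻¹ * s) ≤ ⌈D⌉₊ :=
    Nat.cast_le.mp ((hD s₀ hs₀ s hs).trans (Nat.le_ceil D))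
  have hs₀' : s₀ ∈ H (max (chainIndex H s₀) ⌈D⌉₊) :=
    hmono (le_max_left _ _) (mem_chainIndex hcov s₀)
  have hquot : s₀⁻¹ * s ∈ H (max (chainIndex H s₀) ⌈D⌉₊) :=
    hmono (hindex.trans (le_max_right _ _)) (mem_chainIndex hcov _)
  simpa using mul_mem hs₀' hquot

theorem SBGenerated.exists_eq_top_of_monotone (h : SBGenerated G) (hmono : Monotone H)
    (hcov : ∀ g, ∃ n, g ∈ H n) : ∃ n, H n = ⊤ := by
  obtain ⟨S, hS, hgen⟩ := h
  obtain ⟨n, hn⟩ := hS.exists_subset_of_monotone hmono hcov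
  exact ⟨n, eq_top_iff.2 (hgen ▸ (Subgroup.closure_le _).2 hn)⟩

end Chain

theorem uncountableCofinality_iff {G : Type*} [Group G] :
    UncountableCofinality G ↔
      ∀ H : ℕ → Subgroup G, Monotone H → (∀ g, ∃ n, g ∈ H n) → ∃ n, H n = ⊤ := by
  refine ⟨fun hG H hmono hcov => ?_, fun h ⟨H, hsm, hcov⟩ => ?_⟩
  · by_contra! hne
    have hstep (n : ℕ) : ∃ m, n < m ∧ H n < H m := by
      obtain ⟨g, hg⟩ : ∃ g, g ∉ H n := not_forall.1 fun h => hne n ((Subgroup.eq_top_iff' _).2 h)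
      obtain ⟨m, hm⟩ := hcov g
      have hnm : n < m := lt_of_not_ge fun hmn => hg (hmono hmn hm)
      exact ⟨m, hnm, SetLike.lt_iff_le_and_exists.2 ⟨hmono hnm.le, g, hm, hg⟩⟩
    choose c hc using hstep
    let f : ℕ → ℕ := fun k => c^[k] 0
    have hf_succ (k : ℕ) : f (k + 1) = c (f k) := Function.iterate_succ_apply' c k 0
    have hf : StrictMono f := strictMono_nat_of_lt_succ fun k => hf_succ k ▸ (hc (f k)).1
    have hHf : StrictMono (H ∘ f) := strictMono_nat_of_lt_succ fun k => by
      simpa only [Function.comp_apply, hf_succ] using (hc (f k)).2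
    refine hG ⟨H ∘ f, hHf, fun g => ?_⟩
    obtain ⟨n, hn⟩ := hcov g
    exact ⟨n, hmono (hf.id_le n) hn⟩
  · obtain ⟨n, hn⟩ := h H hsm.monotone hcov
    exact not_top_lt (hn ▸ hsm n.lt_succ_self)

theorem SBGenerated.uncountableCofinality {G : Type*} [Group G] (h : SBGenerated G) :
    UncountableCofinality G :=
  uncountableCofinality_iff.2 fun _ => h.exists_eq_top_of_monotone

theorem Group.FG.sbGenerated {G : Type*} [Group G] (h : Group.FG G) : SBGenerated G := by
  obtain ⟨S, hS, hfin⟩ := Group.fg_iff.mp h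
  refine ⟨S, fun d _ => ?_, hS⟩
  obtain ⟨D, hD⟩ := ((hfin.prod hfin).image fun p : G × G => d p.1 p.2).bddAbove
  exact ⟨D, fun a ha b hb => hD ⟨(a, b), ⟨ha, hb⟩, rfl⟩⟩

theorem Submodule.exists_fg_sup_eq_top {R M : Type*} [Ring R] [AddCommGroup M] [Module R M]
    (N : Submodule R M) [Module.Finite R (M ⧸ N)] : ∃ F : Submodule R M, F.FG ∧ N ⊔ F = ⊤ := by
  obtain ⟨s, hs, hspan⟩ := Submodule.fg_def.1 (Module.Finite.fg_top (R := R) (M := M ⧸ N))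
  obtain ⟨t, -, ht, hts⟩ := Set.exists_subset_image_finite_and (f := N.mkQ) (s := Set.univ)
    (p := (· = s)) |>.1 ⟨s, by simp [Set.image_univ_of_surjective N.mkQ_surjective], hs, rfl⟩
  refine ⟨Submodule.span R t, Submodule.fg_def.2 ⟨t, ht, rfl⟩, ?_⟩
  rw [← Submodule.map_mkQ_eq_top, Submodule.map_span, hts, hspan]

/-- For groups this is equivalent to uncountable cofinality, see `uncountableCofinality_iff`. -/
def ExhaustingChainsReachTop (M : Type*) [AddGroup M] : Prop :=
  ∀ K : ℕ → AddSubgroup M, Monotone K → (∀ x, ∃ n, x ∈ K n) → ∃ n, K n = ⊤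

theorem UncountableCofinality.exhaustingChainsReachTop {G : Type*} [Group G]
    (h : UncountableCofinality G) : ExhaustingChainsReachTop (Additive G) := by
  intro K hmono hcov
  obtain ⟨n, hn⟩ := uncountableCofinality_iff.1 h (fun n => AddSubgroup.toSubgroup' (K n))
    (fun a b hab => AddSubgroup.toSubgroup'.monotone (hmono hab)) fun g => hcov (.ofMul g)
  exact ⟨n, (map_eq_top_iff AddSubgroup.toSubgroup').1 hn⟩

namespace ExhaustingChainsReachTop

variable {M N : Type*} [AddCommGroup M] [AddCommGroup N]

theorem of_surjective (h : ExhaustingChainsReachTop M) (f : M →+ N)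
    (hf : Function.Surjective f) : ExhaustingChainsReachTop N := by
  intro K hmono hcov
  obtain ⟨n, hn⟩ := h (fun n => (K n).comap f) (fun a b hab => AddSubgroup.comap_mono (hmono hab))
    fun x => hcov (f x)
  refine ⟨n, ?_⟩
  rw [← AddSubgroup.map_comap_eq_self_of_surjective hf (K n)]
  simp only [hn, AddSubgroup.map_top_of_surjective f hf]

theorem submodule (h : ExhaustingChainsReachTop M) {R : Type*} [Ring R] [Module R M]
    (K : ℕ → Submodule R M) (hmono : Monotone K) (hcov : ∀ x, ∃ n, x ∈ K n) :
    ∃ n, K n = ⊤ := by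
  obtain ⟨n, hn⟩ := h (fun n => (K n).toAddSubgroup)
    (fun a b hab => Submodule.toAddSubgroup_mono (hmono hab)) hcov
  exact ⟨n, Submodule.toAddSubgroup_injective (by simpa using hn)⟩

section Domain

variable {R : Type*} [CommRing R] [IsDomain R] [Module R M]

open Submodule in
theorem finite_of_linearIndepOn (h : ExhaustingChainsReachTop M) {I : Set M}
    (hI : LinearIndepOn R id I) (hsat : ∀ x : M, ∃ a : R, a ≠ 0 ∧ a • x ∈ span R I) :
    I.Finite := by
  by_contra hinf
  let e : ℕ ↪ I := Set.Infinite.natEmbedding I hinf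
  -- drop the tail `e n, e (n+1), …` of `I` and saturate the span of what is left
  let J : ℕ → Set M := fun n => I \ (fun k => (e k : M)) '' Set.Ici n
  let K : ℕ → Submodule R M := fun n => (torsion R (M ⧸ span R (J n))).comap (mkQ _)
  have mem_K (n : ℕ) (x : M) : x ∈ K n ↔ ∃ a : R, a ≠ 0 ∧ a • x ∈ span R (J n) := by
    simp [K, ← Quotient.mk_smul, mem_nonZeroDivisors_iff_ne_zero]
  have hJ : Monotone J := fun a b hab =>
    Set.sdiff_subset_sdiff_right (Set.image_mono (Set.Ici_subset_Ici.2 hab))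
  have hKmono : Monotone K := fun a b hab x hx => by
    obtain ⟨c, hc, hcx⟩ := (mem_K a x).1 hx
    exact (mem_K b x).2 ⟨c, hc, span_mono (hJ hab) hcx⟩
  have hcov (x : M) : ∃ n, x ∈ K n := by
    obtain ⟨a, ha, hax⟩ := hsat x
    obtain ⟨t, htI, hat⟩ := mem_span_finite_of_mem_span hax
    have he : Function.Injective fun k => (e k : M) := fun _ _ hk => e.injective (Subtype.ext hk)
    obtain ⟨N, hN⟩ := (t.finite_toSet.preimage he.injOn).bddAbove
    refine ⟨N + 1, (mem_K _ x).2 ⟨a, ha, span_mono (fun y hy => ?_) hat⟩⟩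
    refine ⟨htI hy, ?_⟩
    rintro ⟨k, hk, rfl⟩
    exact absurd (hN hy) (Nat.not_le.2 hk)
  obtain ⟨n, hn⟩ := h.submodule K hKmono hcov
  obtain ⟨a, ha, hmem⟩ := (mem_K n (e n)).1 (hn ▸ mem_top)
  refine ha (hI.eq_zero_of_smul_mem_span (e n).2 a (span_mono ?_ hmem))
  rintro y ⟨hyI, hy⟩
  exact ⟨y, ⟨hyI, fun hyn => hy ⟨n, Set.mem_Ici.2 le_rfl, hyn.symm⟩⟩, rfl⟩

theorem exists_finite_smul_mem_span (h : ExhaustingChainsReachTop M) :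
    ∃ s : Set M, s.Finite ∧ ∀ x : M, ∃ a : R, a ≠ 0 ∧ a • x ∈ Submodule.span R s := by
  obtain ⟨I, hI, hmax⟩ := exists_maximal_linearIndepOn R (id : M → M)
  have hsat (x : M) : ∃ a : R, a ≠ 0 ∧ a • x ∈ Submodule.span R I := by
    by_cases hx : x ∈ I
    · exact ⟨1, one_ne_zero, by simpa using Submodule.subset_span hx⟩
    · simpa using hmax x hx
  exact ⟨I, h.finite_of_linearIndepOn hI hsat, hsat⟩

end Domain

theorem moduleFinite_of_field {K : Type*} [Field K] [Module K M] (h : ExhaustingChainsReachTop M) :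
    Module.Finite K M := by
  obtain ⟨s, hs, hsat⟩ := h.exists_finite_smul_mem_span (R := K)
  refine ⟨⟨hs.toFinset, ?_⟩⟩
  rw [hs.coe_toFinset, eq_top_iff]
  intro x _
  obtain ⟨a, ha, hax⟩ := hsat x
  simpa [ha] using Submodule.smul_mem _ a⁻¹ hax

theorem exists_nsmul_eq_zero (h : ExhaustingChainsReachTop M)
    (htors : ∀ x : M, ∃ a : ℤ, a ≠ 0 ∧ a • x = 0) : ∃ m : ℕ, m ≠ 0 ∧ ∀ x : M, m • x = 0 := by
  let K : ℕ → Submodule ℤ M := fun j => Submodule.torsionBy ℤ M (j.factorial : ℤ)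
  have hKmono : Monotone K := fun i j hij => Submodule.torsionBy_le_torsionBy_of_dvd _ _
    (Int.natCast_dvd_natCast.2 (Nat.factorial_dvd_factorial hij))
  have hcov (x : M) : ∃ j, x ∈ K j := by
    obtain ⟨a, ha, hax⟩ := htors x
    refine ⟨a.natAbs, Submodule.torsionBy_le_torsionBy_of_dvd a _ ?_ hax⟩
    exact Int.natAbs_dvd.1 (Int.natCast_dvd_natCast.2
      (Nat.dvd_factorial (Int.natAbs_pos.2 ha) le_rfl))
  obtain ⟨j, hj⟩ := h.submodule K hKmono hcov
  refine ⟨j.factorial, j.factorial_ne_zero, fun x => ?_⟩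
  have hx : x ∈ K j := hj ▸ Submodule.mem_top
  simpa [K] using hx

theorem moduleFinite_of_nsmul_eq_zero (h : ExhaustingChainsReachTop M) {m : ℕ} (hm : m ≠ 0)
    (hexp : ∀ x : M, m • x = 0) : Module.Finite ℤ M := by
  induction m using Nat.strong_induction_on generalizing M with
  | _ m ih =>
  rcases eq_or_ne m 1 with rfl | hm1
  · have : Subsingleton M := ⟨fun x y => by rw [← one_nsmul x, ← one_nsmul y, hexp, hexp]⟩
    infer_instance
  obtain ⟨p, hp, hpm⟩ := Nat.exists_prime_and_dvd hm1
  obtain ⟨m', rfl⟩ := hpm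
  have : Fact p.Prime := ⟨hp⟩
  let pM : Submodule ℤ M := LinearMap.range (p • LinearMap.id)
  have hpQ (q : M ⧸ pM) : p • q = 0 := by
    obtain ⟨x, rfl⟩ := pM.mkQ_surjective q
    rw [← map_nsmul, Submodule.mkQ_apply, Submodule.Quotient.mk_eq_zero]
    exact ⟨x, by simp⟩
  let : Module (ZMod p) (M ⧸ pM) := AddCommMonoid.zmodModule hpQ
  have hQ : Module.Finite (ZMod p) (M ⧸ pM) :=
    (h.of_surjective pM.mkQ.toAddMonoidHom pM.mkQ_surjective).moduleFinite_of_field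
  have : Module.Finite ℤ (M ⧸ pM) := @Module.Finite.trans ℤ (ZMod p) _ _ _ _ _ _ _ _ _ hQ
  obtain ⟨F, hF, hpMF⟩ := pM.exists_fg_sup_eq_top
  -- writing `x = p • y + f` with `f ∈ F` gives `m' • x = m' • f ∈ F`
  have hexpF (q : M ⧸ F) : m' • q = 0 := by
    obtain ⟨x, rfl⟩ := F.mkQ_surjective q
    obtain ⟨_, ⟨y, rfl⟩, f, hf, hx⟩ := Submodule.mem_sup.1 (hpMF ▸ Submodule.mem_top : x ∈ pM ⊔ F)
    rw [← map_nsmul, Submodule.mkQ_apply, Submodule.Quotient.mk_eq_zero, ← hx]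
    simpa [smul_add, smul_smul, mul_comm m' p, hexp y] using F.smul_of_tower_mem m' hf
  have hm' : m' ≠ 0 := right_ne_zero_of_mul hm
  have : Module.Finite ℤ (M ⧸ F) := ih m' (lt_mul_left (Nat.pos_of_ne_zero hm') hp.one_lt)
    (h.of_surjective F.mkQ.toAddMonoidHom F.mkQ_surjective) hm' hexpF
  have : Module.Finite ℤ F := Module.Finite.iff_fg.2 hF
  exact Module.Finite.of_submodule_quotient F

theorem moduleFinite_int (h : ExhaustingChainsReachTop M) : Module.Finite ℤ M := by
  obtain ⟨s, hs, hsat⟩ := h.exists_finite_smul_mem_span (R := ℤ)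
  let B := Submodule.span ℤ s
  have hQ := h.of_surjective B.mkQ.toAddMonoidHom B.mkQ_surjective
  obtain ⟨m, hm, hmQ⟩ := hQ.exists_nsmul_eq_zero fun q => by
    obtain ⟨x, rfl⟩ := B.mkQ_surjective q
    obtain ⟨a, ha, hax⟩ := hsat x
    exact ⟨a, ha, by rwa [← map_zsmul, Submodule.mkQ_apply, Submodule.Quotient.mk_eq_zero]⟩
  have : Module.Finite ℤ (M ⧸ B) := hQ.moduleFinite_of_nsmul_eq_zero hm hmQ
  have : Module.Finite ℤ B := Module.Finite.span_of_finite ℤ hs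
  exact Module.Finite.of_submodule_quotient B

end ExhaustingChainsReachTop

theorem UncountableCofinality.fg {A : Type*} [CommGroup A] (h : UncountableCofinality A) :
    Group.FG A :=
  GroupFG.iff_add_fg.2 (Module.Finite.iff_addGroup_fg.1 h.exhaustingChainsReachTop.moduleFinite_int)

theorem stmt13 {A : Type*} [CommGroup A] :
    (SBGenerated A ↔ Group.FG A) ∧ (Group.FG A ↔ UncountableCofinality A) :=
  have fg_sb : Group.FG A → SBGenerated A := Group.FG.sbGenerated
  have sb_uc : SBGenerated A → UncountableCofinality A := SBGenerated.uncountableCofinality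
  have uc_fg : UncountableCofinality A → Group.FG A := UncountableCofinality.fg
  ⟨⟨uc_fg ∘ sb_uc, fg_sb⟩, ⟨sb_uc ∘ fg_sb, uc_fg⟩⟩
end
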